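/- Let S ⋈ G be a terminating ordered join and σ : S → S a weakly order-preserving involution without fixed points such that Γ₁(G_i) = Γ₁(G_{σ(i)}) for all i ∈ S. Then Γ₀(S ⋈ G) = 0, i.e., the ordered join is a previous-player win. -/

import Mathlib

universe u

/-- Combinatorial game theory (`SetTheory.PGame`, `Nimber`, `grundyValue`, `Impartial`) was
removed from Mathlib; the notions are redefined here with their old meaning. -/
def Nimber : Type (u + 1) := Ordinal.{u}

namespace Nimber
instance : Zero Nimber.{u} := ⟨(0 : Ordinal.{u})⟩
end Nimber

namespace SetTheory

inductive PGame : Type (u + 1)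
  | mk : ∀ α β : Type u, (α → PGame) → (β → PGame) → PGame

namespace PGame

def LeftMoves : PGame.{u} → Type u
  | mk l _ _ _ => l

def RightMoves : PGame.{u} → Type u
  | mk _ r _ _ => r

def moveLeft : ∀ g : PGame.{u}, LeftMoves g → PGame.{u}
  | mk _ _ L _ => L

def moveRight : ∀ g : PGame.{u}, RightMoves g → PGame.{u}
  | mk _ _ _ R => R

instance : Zero PGame.{u} := ⟨⟨PEmpty, PEmpty, PEmpty.elim, PEmpty.elim⟩⟩

def neg : PGame.{u} → PGame.{u}
  | mk l r L R => mk r l (fun j => neg (R j)) (fun i => neg (L i))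

instance : Neg PGame.{u} := ⟨neg⟩

/-- For fixed `x` (given the relations for its options), computes `(x ≤ y, y ≤ x)` by recursion
on `y`, where `x ≤ y ↔ (∀ i, ¬ y ≤ x.moveLeft i) ∧ ∀ j, ¬ y.moveRight j ≤ x`. -/
def leGeAux (x : PGame.{u}) (geL : x.LeftMoves → PGame.{u} → Prop)
    (leR : x.RightMoves → PGame.{u} → Prop) : PGame.{u} → Prop × Prop
  | mk yl yr yL yR =>
    ((∀ i, ¬ geL i (mk yl yr yL yR)) ∧ ∀ j, ¬ (leGeAux x geL leR (yR j)).2,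
     (∀ i, ¬ (leGeAux x geL leR (yL i)).1) ∧ ∀ j, ¬ leR j (mk yl yr yL yR))

/-- `lePair x = (fun y => x ≤ y, fun y => y ≤ x)`. -/
def lePair : PGame.{u} → (PGame.{u} → Prop) × (PGame.{u} → Prop)
  | mk xl xr xL xR =>
    (fun y => (leGeAux (mk xl xr xL xR) (fun i => (lePair (xL i)).2)
        (fun j => (lePair (xR j)).1) y).1,
     fun y => (leGeAux (mk xl xr xL xR) (fun i => (lePair (xL i)).2)
        (fun j => (lePair (xR j)).1) y).2)

instance : LE PGame.{u} := ⟨fun x y => (lePair x).1 y⟩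

def Equiv (x y : PGame.{u}) : Prop := x ≤ y ∧ y ≤ x

instance : HasEquiv PGame.{u} := ⟨Equiv⟩

def ImpartialAux : PGame.{u} → Prop
  | mk l r L R => (mk l r L R ≈ -mk l r L R) ∧ (∀ i, ImpartialAux (L i)) ∧
      ∀ j, ImpartialAux (R j)

class Impartial (G : PGame.{u}) : Prop where
  out : ImpartialAux G

noncomputable def grundyValueAux : PGame.{u} → Ordinal.{u}
  | mk _ _ L _ => sInf (Set.range fun i => grundyValueAux (L i))ᶜ

/-- The Grundy value: the mex of the Grundy values of the (left) options. -/
noncomputable def grundyValue (G : PGame.{u}) : Nimber.{u} := grundyValueAux G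

end PGame

end SetTheory

open SetTheory PGame Nimber

noncomputable section
open Classical in
/-- The state resulting from a (Left) move in component `i₀` of an ordered join:
all components strictly above `i₀` are replaced by the empty game `0`. -/
def ojNextL {S : Type} [PartialOrder S] (x : S → PGame) (i₀ : S) (j : (x i₀).LeftMoves) :
    S → PGame :=
  fun i => if i = i₀ then (x i₀).moveLeft j else if i₀ < i then 0 else x i

open Classical in
def ojNextR {S : Type} [PartialOrder S] (x : S → PGame) (i₀ : S) (j : (x i₀).RightMoves) :
    S → PGame :=
  fun i => if i = i₀ then (x i₀).moveRight j else if i₀ < i then 0 else x i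

/-- The move relation of the ordered join: `OJRel y x` iff `y` results from `x` by a single move. -/
def OJRel {S : Type} [PartialOrder S] (y x : S → PGame) : Prop :=
  (∃ i₀ j, y = ojNextL x i₀ j) ∨ (∃ i₀ j, y = ojNextR x i₀ j)

theorem ojrel_L {S : Type} [PartialOrder S] (x : S → PGame) (i₀ : S) (j : (x i₀).LeftMoves) :
    OJRel (ojNextL x i₀ j) x := Or.inl ⟨i₀, j, rfl⟩

theorem ojrel_R {S : Type} [PartialOrder S] (x : S → PGame) (i₀ : S) (j : (x i₀).RightMoves) :
    OJRel (ojNextR x i₀ j) x := Or.inr ⟨i₀, j, rfl⟩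

/-- The ordered join of a family of games, as a game, given a termination certificate. -/
def ojoinAcc {S : Type} [PartialOrder S] : ∀ x : S → PGame, Acc OJRel x → PGame := fun x h =>
  Acc.rec (motive := fun x _ => PGame)
    (fun x _ ih =>
      PGame.mk (Σ i₀ : S, (x i₀).LeftMoves) (Σ i₀ : S, (x i₀).RightMoves)
        (fun p => ih _ (ojrel_L x p.1 p.2))
        (fun p => ih _ (ojrel_R x p.1 p.2))) h

open Classical in
/-- The ordered join `S ⋈ G` of a family of games `G` over the poset `S`.
(Defined as `0` in the degenerate non-terminating case.) -/
def ojoin {S : Type} [PartialOrder S] (x : S → PGame) : PGame :=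
  if h : Acc OJRel x then ojoinAcc x h else 0

/-- The Grundy set `Γ₁(G)`: the set of Grundy numbers of the options of `G`. -/
def grundySet (G : PGame) : Set Nimber :=
  Set.range fun i => grundyValue (G.moveLeft i)
end

/-- An involution `σ` of a poset is weakly order-preserving if for each `i` the upper set
`{ j | i < j ∨ σ i < j }` is `σ`-invariant. -/
def WeaklyOrderPreserving {S : Type} [PartialOrder S] (σ : S → S) : Prop :=
  ∀ i : S, σ '' {j | i < j ∨ σ i < j} = {j | i < j ∨ σ i < j}

/-! The second player wins by mirroring. She maintains the invariant that for every `i`, either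
`Γ₁(x i) = Γ₁(x (σ i))`, or `Γ₀(x i) = Γ₀(x (σ i))` and every component strictly above `i` or
`σ i` is already empty. A move at `a` to a position of value `g` is answered at `σ a` by an option
of the same value if `g ∈ Γ₁(x (σ a))`; otherwise `g` exceeds `Γ₀(x (σ a)) = Γ₀(x a)`, and by the
mex property the moved component can be brought back down to `Γ₀(x (σ a))`. Weak order
preservation makes the set emptied by these moves `σ`-invariant and forbids `a < σ a`, so a move
at `a` leaves `σ a` alone. A position from which every move can be answered by a move back into
the invariant has Grundy value `0`. -/

noncomputable instance : ConditionallyCompleteLinearOrderBot Nimber.{u} :=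
  inferInstanceAs (ConditionallyCompleteLinearOrderBot Ordinal.{u})

instance : WellFoundedLT Nimber.{u} := inferInstanceAs (WellFoundedLT Ordinal.{u})

theorem Nimber.zero_le (a : Nimber.{u}) : 0 ≤ a :=
  (_root_.zero_le : (0 : Ordinal.{u}) ≤ a)

theorem nonempty_compl_grundySet (G : PGame.{u}) : (grundySet G)ᶜ.Nonempty :=
  nonempty_of_not_bddAbove (@Ordinal.not_bddAbove_compl_of_small (grundySet G) (small_range _))

theorem grundyValue_eq_sInf_compl_grundySet (G : PGame.{u}) :
    grundyValue G = sInf (grundySet G)ᶜ := by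
  cases G; rfl

theorem grundyValue_notMem_grundySet (G : PGame.{u}) : grundyValue G ∉ grundySet G := by
  rw [grundyValue_eq_sInf_compl_grundySet]
  exact csInf_mem (nonempty_compl_grundySet G)

theorem mem_grundySet_of_lt_grundyValue {G : PGame.{u}} {o : Nimber.{u}}
    (h : o < grundyValue G) : o ∈ grundySet G := by
  rw [grundyValue_eq_sInf_compl_grundySet] at h
  exact not_not.1 (notMem_of_lt_csInf' h)

theorem grundyValue_le_of_notMem_grundySet {G : PGame.{u}} {o : Nimber.{u}}
    (h : o ∉ grundySet G) : grundyValue G ≤ o := by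
  rw [grundyValue_eq_sInf_compl_grundySet]
  exact csInf_le' h

theorem grundyValue_moveLeft_ne {G : PGame.{u}} (i : G.LeftMoves) :
    grundyValue (G.moveLeft i) ≠ grundyValue G :=
  fun h => grundyValue_notMem_grundySet G ⟨i, h⟩

theorem grundyValue_ne_zero_of_moveLeft {G : PGame.{u}} (i : G.LeftMoves)
    (h : grundyValue (G.moveLeft i) = 0) : grundyValue G ≠ 0 :=
  h ▸ (grundyValue_moveLeft_ne i).symm

theorem grundyValue_eq_zero_of_forall_moveLeft_ne_zero {G : PGame.{u}}
    (h : ∀ i, grundyValue (G.moveLeft i) ≠ 0) : grundyValue G = 0 :=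
  le_antisymm (grundyValue_le_of_notMem_grundySet fun ⟨i, hi⟩ => h i hi) (Nimber.zero_le _)

theorem ne_zero_of_leftMoves {G : PGame.{u}} (i : G.LeftMoves) : G ≠ 0 := by
  rintro rfl
  exact PEmpty.elim i

section Orbit

variable {S : Type} [PartialOrder S] {σ : S → S}

def aboveOrbit (σ : S → S) (i : S) : Set S := {j | i < j ∨ σ i < j}

theorem WeaklyOrderPreserving.apply_mem_aboveOrbit (hw : WeaklyOrderPreserving σ) {i k : S}
    (hk : k ∈ aboveOrbit σ i) : σ k ∈ aboveOrbit σ i :=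
  (hw i).subset ⟨k, hk, rfl⟩

theorem aboveOrbit_apply (hσ : Function.Involutive σ) (i : S) :
    aboveOrbit σ (σ i) = aboveOrbit σ i := by
  ext k
  simp only [aboveOrbit, Set.mem_ofPred_eq, hσ i, or_comm]

theorem WeaklyOrderPreserving.not_lt_apply (hσ : Function.Involutive σ)
    (hw : WeaklyOrderPreserving σ) (i : S) : ¬ i < σ i := by
  intro hlt
  have h : σ (σ i) ∈ aboveOrbit σ i := hw.apply_mem_aboveOrbit (Or.inl hlt)
  rw [hσ i] at h
  rcases h with h | h
  · exact lt_irrefl i h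
  · exact lt_asymm h hlt

theorem WeaklyOrderPreserving.not_apply_lt (hσ : Function.Involutive σ)
    (hw : WeaklyOrderPreserving σ) (i : S) : ¬ σ i < i := by
  simpa only [hσ i] using hw.not_lt_apply hσ (σ i)

theorem WeaklyOrderPreserving.self_notMem_aboveOrbit (hσ : Function.Involutive σ)
    (hw : WeaklyOrderPreserving σ) (i : S) : i ∉ aboveOrbit σ i := by
  rintro (h | h)
  · exact lt_irrefl i h
  · exact hw.not_apply_lt hσ i h

theorem WeaklyOrderPreserving.apply_notMem_aboveOrbit (hσ : Function.Involutive σ)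
    (hw : WeaklyOrderPreserving σ) (i : S) : σ i ∉ aboveOrbit σ i :=
  aboveOrbit_apply hσ i ▸ hw.self_notMem_aboveOrbit hσ (σ i)

end Orbit

section OrderedJoin

variable {S : Type} [PartialOrder S]

theorem ojNextL_self (x : S → PGame) (a : S) (j : (x a).LeftMoves) :
    ojNextL x a j a = (x a).moveLeft j :=
  if_pos rfl

theorem ojNextL_of_lt (x : S → PGame) {a i : S} (j : (x a).LeftMoves) (h : a < i) :
    ojNextL x a j i = 0 := by
  rw [ojNextL, if_neg h.ne', if_pos h]

theorem ojNextL_of_ne_of_not_lt (x : S → PGame) {a i : S} (j : (x a).LeftMoves) (hne : i ≠ a)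
    (h : ¬ a < i) : ojNextL x a j i = x i := by
  rw [ojNextL, if_neg hne, if_neg h]

theorem ojoin_eq_mk (x : S → PGame) (h : Acc OJRel x) :
    ojoin x = PGame.mk (Σ a : S, (x a).LeftMoves) (Σ a : S, (x a).RightMoves)
      (fun p => ojoin (ojNextL x p.1 p.2)) (fun p => ojoin (ojNextR x p.1 p.2)) := by
  rw [ojoin, dif_pos h]
  obtain ⟨_, _⟩ := h
  show PGame.mk _ _ _ _ = _
  congr 1 <;> funext p <;> exact (dif_pos _).symm

theorem grundyValue_ojoin_eq_zero_of_reply (P : (S → PGame) → Prop)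
    (hP : ∀ x, P x → ∀ a (j : (x a).LeftMoves), ∃ k j₂, P (ojNextL (ojNextL x a j) k j₂))
    {x : S → PGame} (hx : Acc OJRel x) (h : P x) : grundyValue (ojoin x) = 0 := by
  -- `P` is only restored two moves later, hence the induction along `TransGen OJRel`.
  induction hx.transGen with
  | intro x _ ih =>
    rw [ojoin_eq_mk x hx]
    refine grundyValue_eq_zero_of_forall_moveLeft_ne_zero fun ⟨a, j⟩ => ?_
    obtain ⟨k, j₂, hz⟩ := hP x h a j
    have hy : Acc OJRel (ojNextL x a j) := hx.inv (ojrel_L x a j)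
    have hz0 : grundyValue (ojoin (ojNextL (ojNextL x a j) k j₂)) = 0 :=
      ih _ (.head (ojrel_L _ k j₂) (.single (ojrel_L x a j))) (hy.inv (ojrel_L _ k j₂)) hz
    show grundyValue (ojoin (ojNextL x a j)) ≠ 0
    rw [ojoin_eq_mk _ hy]
    exact grundyValue_ne_zero_of_moveLeft ⟨k, j₂⟩ hz0

end OrderedJoin

section Mirror

variable {S : Type} [PartialOrder S] {σ : S → S}

def IsMirrored (σ : S → S) (x : S → PGame) : Prop :=
  ∀ i, grundySet (x i) = grundySet (x (σ i)) ∨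
    (grundyValue (x i) = grundyValue (x (σ i)) ∧ ∀ k ∈ aboveOrbit σ i, x k = 0)

theorem IsMirrored.of_reply (hσ : Function.Involutive σ) (hw : WeaklyOrderPreserving σ)
    {x z : S → PGame} (hx : IsMirrored σ x) {a : S}
    (habove : ∀ k ∈ aboveOrbit σ a, z k = 0)
    (hrest : ∀ k ∉ aboveOrbit σ a, k ≠ a → k ≠ σ a → z k = x k)
    (ha : x a = 0 → z a = 0) (hσa : x (σ a) = 0 → z (σ a) = 0)
    (hval : grundyValue (z a) = grundyValue (z (σ a))) : IsMirrored σ z := by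
  intro i
  by_cases hi : i = a ∨ i = σ a
  · right
    rcases hi with rfl | rfl
    · exact ⟨hval, habove⟩
    · rw [hσ a, aboveOrbit_apply hσ]
      exact ⟨hval.symm, habove⟩
  rw [not_or] at hi
  by_cases hiU : i ∈ aboveOrbit σ a
  · left
    rw [habove i hiU, habove (σ i) (hw.apply_mem_aboveOrbit hiU)]
  have hσiU : σ i ∉ aboveOrbit σ a := fun h => hiU (hσ i ▸ hw.apply_mem_aboveOrbit h)
  have hσi : σ i ≠ a ∧ σ i ≠ σ a :=
    ⟨fun h => hi.2 (by rw [← h, hσ i]), fun h => hi.1 (hσ.injective h)⟩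
  rw [hrest i hiU hi.1 hi.2, hrest (σ i) hσiU hσi.1 hσi.2]
  refine (hx i).imp id (And.imp_right fun hzero k hk => ?_)
  by_cases hkU : k ∈ aboveOrbit σ a
  · exact habove k hkU
  by_cases hka : k = a
  · exact hka ▸ ha (hka ▸ hzero k hk)
  by_cases hkσa : k = σ a
  · exact hkσa ▸ hσa (hkσa ▸ hzero k hk)
  rw [hrest k hkU hka hkσa]
  exact hzero k hk

theorem IsMirrored.exists_reply_opposite (hσ : Function.Involutive σ)
    (hw : WeaklyOrderPreserving σ) (hfree : ∀ i, σ i ≠ i) {x : S → PGame} (hx : IsMirrored σ x)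
    {a : S} (j : (x a).LeftMoves)
    (hmem : grundyValue ((x a).moveLeft j) ∈ grundySet (x (σ a))) :
    ∃ k j₂, IsMirrored σ (ojNextL (ojNextL x a j) k j₂) := by
  have hxσa : x (σ a) ≠ 0 := by
    obtain ⟨j', -⟩ := hmem
    exact ne_zero_of_leftMoves j'
  have hyσa : ojNextL x a j (σ a) = x (σ a) :=
    ojNextL_of_ne_of_not_lt x j (hfree a) (hw.not_lt_apply hσ a)
  rw [← hyσa] at hmem
  obtain ⟨j₂, hj₂⟩ := hmem
  refine ⟨σ a, j₂, hx.of_reply hσ hw (fun k hk => ?_) (fun k hk hka hkσa => ?_)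
    (fun h => absurd h (ne_zero_of_leftMoves j)) (fun h => absurd h hxσa) ?_⟩
  · by_cases hσak : σ a < k
    · exact ojNextL_of_lt _ j₂ hσak
    have hkσa : k ≠ σ a := fun h => hw.apply_notMem_aboveOrbit hσ a (h ▸ hk)
    rw [ojNextL_of_ne_of_not_lt _ j₂ hkσa hσak, ojNextL_of_lt x j (hk.resolve_right hσak)]
  · obtain ⟨hak, hσak⟩ := not_or.1 hk
    rw [ojNextL_of_ne_of_not_lt _ j₂ hkσa hσak, ojNextL_of_ne_of_not_lt x j hka hak]
  · rw [ojNextL_of_ne_of_not_lt _ j₂ (hfree a).symm (hw.not_apply_lt hσ a),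
      ojNextL_self, ojNextL_self]
    exact hj₂.symm

theorem IsMirrored.exists_reply_same (hσ : Function.Involutive σ)
    (hw : WeaklyOrderPreserving σ) (hfree : ∀ i, σ i ≠ i) {x : S → PGame} (hx : IsMirrored σ x)
    {a : S} (j : (x a).LeftMoves) (hzero : ∀ k ∈ aboveOrbit σ a, x k = 0)
    (hlt : grundyValue (x (σ a)) < grundyValue ((x a).moveLeft j)) :
    ∃ k j₂, IsMirrored σ (ojNextL (ojNextL x a j) k j₂) := by
  have hmem : grundyValue (x (σ a)) ∈ grundySet (ojNextL x a j a) := by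
    rw [ojNextL_self]
    exact mem_grundySet_of_lt_grundyValue hlt
  obtain ⟨j₂, hj₂⟩ := hmem
  have hz : ∀ k ≠ a, ¬ a < k → ojNextL (ojNextL x a j) a j₂ k = x k := fun k hka hak => by
    rw [ojNextL_of_ne_of_not_lt _ j₂ hka hak, ojNextL_of_ne_of_not_lt x j hka hak]
  have hzσa : ojNextL (ojNextL x a j) a j₂ (σ a) = x (σ a) :=
    hz (σ a) (hfree a) (hw.not_lt_apply hσ a)
  refine ⟨a, j₂, hx.of_reply hσ hw (fun k hk => ?_) (fun k hk hka _ => hz k hka (not_or.1 hk).1)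
    (fun h => absurd h (ne_zero_of_leftMoves j)) (fun h => hzσa.trans h) ?_⟩
  · by_cases hak : a < k
    · exact ojNextL_of_lt _ j₂ hak
    have hka : k ≠ a := fun h => hw.self_notMem_aboveOrbit hσ a (h ▸ hk)
    rw [hz k hka hak]
    exact hzero k hk
  · rw [ojNextL_self, hzσa]
    exact hj₂

theorem IsMirrored.exists_reply (hσ : Function.Involutive σ) (hw : WeaklyOrderPreserving σ)
    (hfree : ∀ i, σ i ≠ i) {x : S → PGame} (hx : IsMirrored σ x) (a : S)
    (j : (x a).LeftMoves) : ∃ k j₂, IsMirrored σ (ojNextL (ojNextL x a j) k j₂) := by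
  by_cases hmem : grundyValue ((x a).moveLeft j) ∈ grundySet (x (σ a))
  · exact hx.exists_reply_opposite hσ hw hfree j hmem
  obtain ⟨hval, hzero⟩ := (hx a).resolve_left fun h => hmem (h ▸ ⟨j, rfl⟩)
  have hlt : grundyValue (x (σ a)) < grundyValue ((x a).moveLeft j) :=
    lt_of_le_of_ne (not_lt.1 fun h => hmem (mem_grundySet_of_lt_grundyValue h))
      (hval ▸ grundyValue_moveLeft_ne j).symm
  exact hx.exists_reply_same hσ hw hfree j hzero hlt

end Mirror

theorem ojoin_symmetry_zero_general {S : Type} [PartialOrder S] (G : S → PGame)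
    (hG : Acc OJRel G)
    (σ : S → S) (hinv : σ ∘ σ = id) (hw : WeaklyOrderPreserving σ)
    (hfree : ∀ i, σ i ≠ i)
    (hsym : ∀ i, grundySet (G i) = grundySet (G (σ i))) :
    grundyValue (ojoin G) = 0 := by
  have hσ : Function.Involutive σ := congrFun hinv
  exact grundyValue_ojoin_eq_zero_of_reply (IsMirrored σ)
    (fun _ hx => hx.exists_reply hσ hw hfree) hG fun i => Or.inl (hsym i)

/-- mirror symmetry, fixed-point free case: if `σ` is a fixed-point free weakly
order-preserving involution of `S` with `Γ₁(G i) = Γ₁(G (σ i))` for all `i`, then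
`Γ₀(S ⋈ G) = 0`, i.e. the ordered join is a previous-player win. -/
theorem ojoin_symmetry_zero {S : Type} [PartialOrder S] (G : S → PGame)
    (hI : ∀ i, (G i).Impartial) (hG : Acc OJRel G)
    (σ : S → S) (hinv : σ ∘ σ = id) (hw : WeaklyOrderPreserving σ)
    (hfree : ∀ i, σ i ≠ i)
    (hsym : ∀ i, grundySet (G i) = grundySet (G (σ i))) :
    grundyValue (ojoin G) = 0 :=
  ojoin_symmetry_zero_general G hG σ hinv hw hfree hsym
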